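/- arXiv:1907.08384 — 9 statements merged into one kernel-verified Lean document; each statement's English description precedes it below -/
import Mathlib

section
/- If f_1,...,f_n : X → Y are maps and {U_0,...,U_k} is any open cover of X, then D(f_1,...,f_n) ≤ Σ_{i=0}^{k} D(f_1|_{U_i},...,f_n|_{U_i}) + k. -/
open Set

/-- The `n`-th homotopic distance of maps `f 0, …, f (n-1) : X → Y`:
the least `k` admitting an open cover `U 0, …, U k` of `X` on each element of
which all the maps are pairwise homotopic; `∞` if no such cover exists. -/
noncomputable def homDist {X Y : Type*} [TopologicalSpace X] [TopologicalSpace Y]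
    {n : ℕ} (f : Fin n → C(X, Y)) : ℕ∞ :=
  sInf ((fun k : ℕ => (k : ℕ∞)) '' {k | ∃ U : Fin (k + 1) → Set X,
    (∀ j, IsOpen (U j)) ∧ (⋃ j, U j) = Set.univ ∧
    ∀ j i i', ((f i).restrict (U j)).Homotopic ((f i').restrict (U j))})

/-!
Refine the cover: choose for each `U i` an optimal open cover `V i 0, …, V i (mᵢ)` of `U i` on whose
members the restricted maps are pairwise homotopic. Since `U i` is open in `X`, the sets `V i j`
are open in `X` as well, and together they cover `X` with `∑ (mᵢ + 1) = ∑ mᵢ + k + 1` members.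
If some `U i` admits no finite such cover, the right-hand side is `∞`.
-/

section

variable {X Y : Type*} [TopologicalSpace X] [TopologicalSpace Y] {n : ℕ}

structure IsHomotopyCover {ι : Type*} (f : Fin n → C(X, Y)) (U : ι → Set X) : Prop where
  isOpen : ∀ j, IsOpen (U j)
  iUnion_eq : ⋃ j, U j = univ
  homotopic : ∀ j i i', ((f i).restrict (U j)).Homotopic ((f i').restrict (U j))

theorem IsHomotopyCover.homDist_le {ι : Type*} [Fintype ι] {f : Fin n → C(X, Y)}
    {U : ι → Set X} (hU : IsHomotopyCover f U) {m : ℕ} (hcard : Fintype.card ι = m + 1) :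
    homDist f ≤ m := by
  let e := Fintype.equivFinOfCardEq hcard
  refine sInf_le ⟨m, ⟨U ∘ e.symm, fun j => hU.isOpen _, ?_, fun j => hU.homotopic _⟩, rfl⟩
  rw [← hU.iUnion_eq]
  exact e.symm.iSup_comp

theorem exists_isHomotopyCover_of_homDist_eq {f : Fin n → C(X, Y)} {m : ℕ}
    (h : homDist f = m) : ∃ U : Fin (m + 1) → Set X, IsHomotopyCover f U := by
  obtain ⟨k, ⟨U, hopen, hcover, hhom⟩, hk⟩ : homDist f ∈ _ :=
    csInf_mem (nonempty_iff_ne_empty.mpr fun hempty => by simp [homDist, hempty] at h)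
  obtain rfl : k = m := Nat.cast_injective (hk.trans h)
  exact ⟨U, hopen, hcover, hhom⟩

theorem ContinuousMap.Homotopic.restrict_image_val {U : Set X} {V : Set U} {g g' : C(X, Y)}
    (h : ((g.restrict U).restrict V).Homotopic ((g'.restrict U).restrict V)) :
    (g.restrict (Subtype.val '' V)).Homotopic (g'.restrict (Subtype.val '' V)) := by
  have mem (x : Subtype.val '' V) : ∃ hx : (x : X) ∈ U, (⟨x, hx⟩ : U) ∈ V := by
    simpa only [Subtype.coe_image, mem_ofPred_eq] using x.2
  let φ : C(Subtype.val '' V, V) := ⟨fun x => ⟨⟨x, (mem x).1⟩, (mem x).2⟩, by fun_prop⟩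
  exact h.comp (.refl φ)

theorem IsHomotopyCover.sigma {ι : Type*} {κ : ι → Type*} {f : Fin n → C(X, Y)}
    {U : ι → Set X} (hUopen : ∀ i, IsOpen (U i)) (hUcover : ⋃ i, U i = univ)
    {V : ∀ i, κ i → Set (U i)} (hV : ∀ i, IsHomotopyCover (fun l => (f l).restrict (U i)) (V i)) :
    IsHomotopyCover f fun p : Σ i, κ i => Subtype.val '' V p.1 p.2 where
  isOpen p := (hUopen p.1).isOpenMap_subtype_val _ ((hV p.1).isOpen p.2)
  iUnion_eq := by
    refine eq_univ_of_forall fun x => ?_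
    obtain ⟨i, hi⟩ := mem_iUnion.mp (hUcover ▸ mem_univ x)
    obtain ⟨j, hj⟩ := mem_iUnion.mp ((hV i).iUnion_eq ▸ mem_univ (⟨x, hi⟩ : U i))
    exact mem_iUnion.mpr ⟨⟨i, j⟩, ⟨x, hi⟩, hj, rfl⟩
  homotopic p i i' := ((hV p.1).homotopic p.2 i i').restrict_image_val

end

/-- For any open cover `{U₀, …, U_k}` of `X`,
`D(f₁, …, fₙ) ≤ ∑ᵢ D(f₁|_{Uᵢ}, …, fₙ|_{Uᵢ}) + k`. -/
theorem homDist_le_sum_restrict {X Y : Type*} [TopologicalSpace X] [TopologicalSpace Y]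
    {n k : ℕ} (f : Fin n → C(X, Y)) (U : Fin (k + 1) → Set X)
    (hUopen : ∀ i, IsOpen (U i)) (hUcover : (⋃ i, U i) = Set.univ) :
    homDist f ≤ (∑ i : Fin (k + 1), homDist (fun l => (f l).restrict (U i))) + k := by
  by_cases htop : ∃ i, homDist (fun l => (f l).restrict (U i)) = ⊤
  · obtain ⟨i, hi⟩ := htop
    rw [ENat.sum_eq_top.mpr ⟨i, Finset.mem_univ i, hi⟩, top_add]
    exact le_top
  push Not at htop
  choose m hm using fun i => ENat.ne_top_iff_exists.mp (htop i)
  choose V hV using fun i => exists_isHomotopyCover_of_homDist_eq (hm i).symm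
  have hcard : Fintype.card (Σ i, Fin (m i + 1)) = (∑ i, m i + k) + 1 := by
    simp only [Fintype.card_sigma, Fintype.card_fin, Finset.sum_add_distrib, Finset.sum_const,
      Finset.card_univ, smul_eq_mul, mul_one]
    ring
  calc homDist f ≤ ((∑ i, m i + k : ℕ) : ℕ∞) :=
        (IsHomotopyCover.sigma hUopen hUcover hV).homDist_le hcard
    _ = _ := by simp [hm]
end

section
/- For a fixed basepoint x_0 ∈ X, let j_i : X^{n-1} → X^n be the inclusion inserting x_0 in the i-th coordinate, i.e. j_i(x_1,...,x_{n-1}) = (x_1,...,x_{i-1}, x_0, x_i,...,x_{n-1}), for i = 1,...,n. Then D(j_1,...,j_n) = cat(X^{n-1}). -/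
/-!
If the inclusion of `U` into `X^n` is null-homotopic, so is every restriction `jᵢ|U`, and any
two null-homotopic maps into the path-connected space `X^(n+1)` are homotopic.
Conversely, deleting coordinate `k + 1` turns the insertion at `k` into the map overwriting
coordinate `k` with `x₀`, and the insertion at `k + 1` into the identity. So a homotopy between
the two insertions on `U` shows that overwriting a coordinate does not change the homotopy class
of the inclusion of `U`; overwriting all coordinates one after another contracts it to the
constant map. Hence the covers admissible for `D(j₁, …, jₙ)` and for `cat(X^(n-1))` coincide.
-/

open Set

/-- The reduced Lusternik–Schnirelmann category of `X`: the least `k` such that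
`X` admits an open cover of `k+1` open sets, each inclusion being null-homotopic. -/
noncomputable def lsCat (X : Type*) [TopologicalSpace X] : ℕ∞ :=
  sInf ((fun k : ℕ => (k : ℕ∞)) '' {k | ∃ U : Fin (k + 1) → Set X,
    (∀ j, IsOpen (U j)) ∧ (⋃ j, U j) = Set.univ ∧
    ∀ j, ∃ y : X, ((ContinuousMap.id X).restrict (U j)).Homotopic
      (ContinuousMap.const _ y)})

open Function

namespace ContinuousMap

variable {Z Y : Type*} [TopologicalSpace Z] [TopologicalSpace Y]

theorem Nullhomotopic.homotopic [PathConnectedSpace Y] {f g : C(Z, Y)}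
    (hf : f.Nullhomotopic) (hg : g.Nullhomotopic) : f.Homotopic g := by
  obtain ⟨a, ha⟩ := hf
  obtain ⟨b, hb⟩ := hg
  exact (ha.trans ⟨(PathConnectedSpace.somePath a b).toHomotopyConst⟩).trans hb.symm

section Pi

variable {ι X : Type*} [TopologicalSpace X] [DecidableEq ι]

def piUpdate (k : ι) (x : X) : C(ι → X, ι → X) :=
  ⟨fun p => update p k x, continuous_id.update k continuous_const⟩

def piPiecewiseConst (s : Finset ι) (x : X) : C(ι → X, ι → X) :=
  ⟨fun p => s.piecewise (fun _ => x) p, continuous_pi fun i => by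
    by_cases hi : i ∈ s
    · simpa [Finset.piecewise_eq_of_mem _ _ _ hi] using continuous_const
    · simpa [Finset.piecewise_eq_of_notMem _ _ _ hi] using continuous_apply i⟩

theorem piPiecewiseConst_empty (x : X) :
    piPiecewiseConst (∅ : Finset ι) x = ContinuousMap.id _ := by
  ext p i
  simp [piPiecewiseConst]

theorem piPiecewiseConst_insert (k : ι) (s : Finset ι) (x : X) :
    piPiecewiseConst (insert k s) x = (piPiecewiseConst s x).comp (piUpdate k x) := by
  ext p i
  simp only [piPiecewiseConst, piUpdate, coe_mk, comp_apply, Finset.piecewise, Finset.mem_insert,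
    update_apply]
  split_ifs <;> simp_all

theorem piPiecewiseConst_univ [Fintype ι] (x : X) :
    piPiecewiseConst (Finset.univ : Finset ι) x = const _ fun _ => x := by
  ext p i
  simp [piPiecewiseConst]

theorem homotopic_const_of_forall_piUpdate_comp_homotopic [Fintype ι] (x : X)
    (g : C(Z, ι → X)) (h : ∀ k, ((piUpdate k x).comp g).Homotopic g) :
    g.Homotopic (const Z fun _ => x) := by
  have fill : ∀ s : Finset ι, ((piPiecewiseConst s x).comp g).Homotopic g := by
    intro s
    induction s using Finset.induction_on with
    | empty => rw [piPiecewiseConst_empty, id_comp]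
    | insert k s _ ih =>
      rw [piPiecewiseConst_insert, comp_assoc]
      exact (Homotopic.comp (.refl _) (h k)).trans ih
  simpa [piPiecewiseConst_univ] using (fill Finset.univ).symm

end Pi

end ContinuousMap

theorem Fin.removeNth_succ_insertNth_castSucc {α : Type*} {n : ℕ} (k : Fin n) (x : α)
    (p : Fin n → α) :
    (k.succ.removeNth (k.castSucc.insertNth x p : Fin (n + 1) → α) : Fin n → α) =
      update p k x := by
  ext m
  rcases lt_trichotomy m k with hm | rfl | hm
  · have hcast : m.castSucc < k.castSucc := Fin.castSucc_lt_castSucc_iff.mpr hm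
    rw [Fin.removeNth_apply, Fin.succAbove_of_castSucc_lt _ _ (hcast.trans Fin.castSucc_lt_succ),
      ← Fin.succAbove_of_castSucc_lt _ _ hcast, Fin.insertNth_apply_succAbove, update_of_ne hm.ne]
  · rw [Fin.removeNth_apply, Fin.succAbove_of_castSucc_lt _ _ Fin.castSucc_lt_succ,
      Fin.insertNth_apply_same, update_self]
  · rw [Fin.removeNth_apply, Fin.succAbove_of_le_castSucc _ _ (Fin.succ_le_castSucc_iff.mpr hm),
      ← Fin.succAbove_of_le_castSucc _ _ (Fin.castSucc_le_castSucc_iff.mpr hm.le),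
      Fin.insertNth_apply_succAbove, update_of_ne hm.ne']

namespace ContinuousMap

variable {X Z : Type*} [TopologicalSpace X] [TopologicalSpace Z] {n : ℕ}

def finInsertNth (i : Fin (n + 1)) (x : X) : C(Fin n → X, Fin (n + 1) → X) :=
  ⟨fun p => i.insertNth x p, continuous_const.finInsertNth i continuous_id⟩

def finRemoveNth (i : Fin (n + 1)) : C(Fin (n + 1) → X, Fin n → X) :=
  ⟨i.removeNth, continuous_pi fun _ => continuous_apply _⟩

theorem piUpdate_comp_homotopic_of_finInsertNth_comp_homotopic (k : Fin n) (x : X)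
    (g : C(Z, Fin n → X))
    (h : ((finInsertNth k.castSucc x).comp g).Homotopic ((finInsertNth k.succ x).comp g)) :
    ((piUpdate k x).comp g).Homotopic g := by
  have hcast : (finRemoveNth k.succ).comp (finInsertNth k.castSucc x) = piUpdate k x := by
    ext p : 1
    exact Fin.removeNth_succ_insertNth_castSucc k x p
  have hsucc : (finRemoveNth k.succ).comp (finInsertNth k.succ x) = ContinuousMap.id _ := by
    ext p : 1
    exact Fin.removeNth_insertNth (α := fun _ => X) _ _ _
  simpa [← comp_assoc, hcast, hsucc] using Homotopic.comp (.refl (finRemoveNth k.succ)) h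

theorem finInsertNth_comp_homotopic_iff [PathConnectedSpace X] (x : X) (g : C(Z, Fin n → X)) :
    (∀ i i', ((finInsertNth i x).comp g).Homotopic ((finInsertNth i' x).comp g)) ↔
      g.Nullhomotopic := by
  refine ⟨fun h => ⟨_, homotopic_const_of_forall_piUpdate_comp_homotopic x g fun k =>
    piUpdate_comp_homotopic_of_finInsertNth_comp_homotopic k x g (h _ _)⟩,
    fun hg _ _ => (hg.comp_right _).homotopic (hg.comp_right _)⟩

end ContinuousMap

/-- For the `n` inclusions `jᵢ : X^{n-1} → X^n` inserting a fixed basepoint `x₀`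
in the `i`-th coordinate, `D(j₁, …, jₙ) = cat(X^{n-1})`. -/
theorem homDist_insertNth_eq_lsCat {X : Type*} [TopologicalSpace X]
    [PathConnectedSpace X] (n : ℕ) (x₀ : X) :
    homDist (fun i : Fin (n + 1) =>
      (⟨fun p : Fin n → X => i.insertNth x₀ p,
        continuous_const.finInsertNth i continuous_id⟩ :
          C((Fin n → X), (Fin (n + 1) → X)))) = lsCat (Fin n → X) := by
  unfold homDist lsCat
  congr
  ext k
  refine exists_congr fun U => and_congr_right' <| and_congr_right' <| forall_congr' fun j => ?_
  -- `f.restrict U` is `f.comp ((id _).restrict U)` and the condition in `lsCat` is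
  -- `Nullhomotopic`, both definitionally.
  exact ContinuousMap.finInsertNth_comp_homotopic_iff x₀ ((ContinuousMap.id _).restrict (U j))
end

section
/- Let f_1,...,f_n : X → Y be maps, let e_n : Y^{J_n} → Y^n be the n-legged path fibration, and let q : P → X be the pullback of e_n along F = (f_1,...,f_n) : X → Y^n. Then D(f_1,...,f_n) = secat(q). -/
open Set

/-- The sectional category of a map `q : E → B`: the least `k` such that `B`
has an open cover of `k+1` open sets each admitting a continuous local section. -/
noncomputable def secat {E B : Type*} [TopologicalSpace E] [TopologicalSpace B]
    (q : C(E, B)) : ℕ∞ :=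
  sInf ((fun k : ℕ => (k : ℕ∞)) '' {k | ∃ U : Fin (k + 1) → Set B,
    (∀ j, IsOpen (U j)) ∧ (⋃ j, U j) = Set.univ ∧
    ∀ j, ∃ s : C(U j, E), ∀ x : U j, q (s x) = (x : B)})

/-- The space `X^{J_n}` of `n`-legged paths in `X`: `n` paths with a common
initial point (the wedge of `n` intervals glued at `0`, mapped into `X`). -/
abbrev NLegged (X : Type*) [TopologicalSpace X] (n : ℕ) : Type _ :=
  {γ : Fin n → C(unitInterval, X) // ∀ i j : Fin n, γ i 0 = γ j 0}

/-- The fibration `e_n : X^{J_n} → X^n` evaluating at the `n` free endpoints. -/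
def enMap (X : Type*) [TopologicalSpace X] (n : ℕ) :
    C(NLegged X n, Fin n → X) :=
  ⟨fun γ i => (γ.1 i) 1, by
    apply continuous_pi; intro i
    exact (continuous_eval_const (1 : unitInterval)).comp
      ((continuous_apply i).comp continuous_subtype_val)⟩

/-!
A local section of `q` over `U` is a continuous family of `n`-legged paths whose free ends
are `f₁|U, …, fₙ|U`. By the exponential law each leg is a homotopy from the common starting
map to `fᵢ|U`, so such a family exists iff the `fᵢ|U` are pairwise homotopic: run one leg
backwards and another forwards, or, conversely, start all legs at one fixed `fᵢ₀|U`.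
-/

open unitInterval

namespace ContinuousMap

variable {Z Y : Type*} [TopologicalSpace Z] [TopologicalSpace Y]

theorem homotopic_iff_exists_pathFamily {f g : C(Z, Y)} :
    f.Homotopic g ↔ ∃ Γ : C(Z, C(I, Y)), ∀ z, Γ z 0 = f z ∧ Γ z 1 = g z := by
  constructor
  · rintro ⟨H⟩
    exact ⟨(H.toContinuousMap.comp prodSwap).curry,
      fun z => ⟨H.apply_zero z, H.apply_one z⟩⟩
  · rintro ⟨Γ, hΓ⟩
    exact ⟨⟨Γ.uncurry.comp prodSwap, fun z => (hΓ z).1, fun z => (hΓ z).2⟩⟩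

theorem exists_nLegged_lift_iff {n : ℕ} (f : Fin n → C(Z, Y)) :
    (∃ γ : C(Z, NLegged Y n), ∀ z i, (γ z).1 i 1 = f i z) ↔
      ∀ i i', (f i).Homotopic (f i') := by
  constructor
  · rintro ⟨γ, hγ⟩ i i'
    let leg (j : Fin n) : C(Z, C(I, Y)) := ⟨fun z => (γ z).1 j,
      (continuous_apply j).comp (continuous_subtype_val.comp γ.continuous)⟩
    let start : C(Z, Y) :=
      ⟨fun z => (γ z).1 i 0, (continuous_eval_const 0).comp (leg i).continuous⟩
    have start_homotopic (j : Fin n) : start.Homotopic (f j) :=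
      homotopic_iff_exists_pathFamily.2 ⟨leg j, fun z => ⟨(γ z).2 j i, hγ z j⟩⟩
    exact (start_homotopic i).symm.trans (start_homotopic i')
  · intro h
    rcases isEmpty_or_nonempty (Fin n) with _ | ⟨⟨i₀⟩⟩
    · exact ⟨⟨fun _ => ⟨isEmptyElim, isEmptyElim⟩, by fun_prop⟩, fun _ => isEmptyElim⟩
    choose Γ hΓ using fun i => homotopic_iff_exists_pathFamily.1 (h i₀ i)
    refine ⟨⟨fun z => ⟨fun i => Γ i z, fun i j => ?_⟩, ?_⟩, fun z i => (hΓ i z).2⟩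
    · rw [(hΓ i z).1, (hΓ j z).1]
    · exact (continuous_pi fun i => (Γ i).continuous).subtype_mk _

end ContinuousMap

theorem exists_section_pullback_iff {X Y : Type*} [TopologicalSpace X] [TopologicalSpace Y]
    {n : ℕ} (f : Fin n → C(X, Y)) (U : Set X) :
    (∃ s : C(U, {p : X × NLegged Y n // ∀ i, (p.2.1 i) 1 = f i p.1}),
        ∀ x : U, (s x).1.1 = (x : X)) ↔
      ∃ γ : C(U, NLegged Y n), ∀ x i, (γ x).1 i 1 = (f i).restrict U x := by
  constructor
  · rintro ⟨s, hs⟩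
    refine ⟨⟨fun x => (s x).1.2, by fun_prop⟩, fun x i => ?_⟩
    simpa [hs x] using (s x).2 i
  · rintro ⟨γ, hγ⟩
    exact ⟨⟨fun x => ⟨((x : X), γ x), hγ x⟩, by fun_prop⟩, fun _ => rfl⟩

/-- `D(f₁, …, fₙ) = secat(q)`, where `q : P → X` is the pullback of the
`n`-legged path fibration `e_n : Y^{J_n} → Y^n` along `F = (f₁, …, fₙ)`. -/
theorem homDist_eq_secat_pullback {X Y : Type*} [TopologicalSpace X]
    [TopologicalSpace Y] {n : ℕ} (f : Fin n → C(X, Y)) :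
    homDist f =
      secat (E := {p : X × NLegged Y n // ∀ i, (p.2.1 i) 1 = f i p.1})
        ⟨fun p => p.1.1, continuous_fst.comp continuous_subtype_val⟩ := by
  simp only [homDist, secat, ContinuousMap.coe_mk, exists_section_pullback_iff,
    ContinuousMap.exists_nLegged_lift_iff]
end

section
/- If f_1,...,f_n : X → Y are maps with Y path-connected, then D(f_1,...,f_n) ≤ TC_n(Y). -/
open Set

/-! A local section of `e_n` over `U ⊆ Yⁿ`, pulled back along `x ↦ (f₁ x, …, fₙ x)`, chooses
continuously for each `x` over `U` a star of `n` paths from a common point to `f₁ x, …, fₙ x`.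
Running along the legs homotopes every `fᵢ` to the same map (the common initial point), so the
preimage of a sectional cover of `Yⁿ` is an open cover of `X` on which the `fᵢ` are pairwise
homotopic. -/

theorem ContinuousMap.homotopic_of_pathFamily {Z Y : Type*} [TopologicalSpace Z]
    [TopologicalSpace Y] (γ : C(Z, C(unitInterval, Y))) {f g : C(Z, Y)}
    (hf : ∀ z, γ z 0 = f z) (hg : ∀ z, γ z 1 = g z) : f.Homotopic g :=
  ⟨{ toContinuousMap := γ.uncurry.comp ContinuousMap.prodSwap
     map_zero_left := hf
     map_one_left := hg }⟩

namespace NLegged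

variable {X Y Z : Type*} [TopologicalSpace X] [TopologicalSpace Y] [TopologicalSpace Z] {n : ℕ}

def leg (Φ : C(Z, NLegged Y n)) (i : Fin n) : C(Z, C(unitInterval, Y)) :=
  ⟨fun z => (Φ z).1 i, (continuous_apply i).comp (continuous_subtype_val.comp Φ.continuous)⟩

theorem homotopic_endpoints (Φ : C(Z, NLegged Y n)) (i i' : Fin n) :
    ((ContinuousMap.eval i).comp ((enMap Y n).comp Φ)).Homotopic
      ((ContinuousMap.eval i').comp ((enMap Y n).comp Φ)) := by
  let base : C(Z, Y) := ⟨fun z => leg Φ i z 0, by fun_prop⟩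
  have hi : base.Homotopic ((ContinuousMap.eval i).comp ((enMap Y n).comp Φ)) :=
    (leg Φ i).homotopic_of_pathFamily (fun _ => rfl) (fun _ => rfl)
  have hi' : base.Homotopic ((ContinuousMap.eval i').comp ((enMap Y n).comp Φ)) :=
    (leg Φ i').homotopic_of_pathFamily (fun z => (Φ z).2 i' i) (fun _ => rfl)
  exact hi.symm.trans hi'

theorem homotopic_restrict_preimage_of_section (f : Fin n → C(X, Y))
    {U : Set (Fin n → Y)} (s : C(U, NLegged Y n)) (hs : ∀ y : U, enMap Y n (s y) = y)
    (i i' : Fin n) :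
    ((f i).restrict (ContinuousMap.pi f ⁻¹' U)).Homotopic
      ((f i').restrict (ContinuousMap.pi f ⁻¹' U)) := by
  let Φ := s.comp ((ContinuousMap.pi f).restrictPreimage U)
  have hΦ : ∀ i, (f i).restrict (ContinuousMap.pi f ⁻¹' U) =
      (ContinuousMap.eval i).comp ((enMap Y n).comp Φ) :=
    fun i => by ext x; exact (congrFun (hs ((ContinuousMap.pi f).restrictPreimage U x)) i).symm
  rw [hΦ i, hΦ i']
  exact homotopic_endpoints Φ i i'

end NLegged

theorem homDist_le_TC_general {X Y : Type*} [TopologicalSpace X] [TopologicalSpace Y]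
    {n : ℕ} (f : Fin n → C(X, Y)) :
    homDist f ≤ secat (enMap Y n) := by
  refine sInf_le_sInf (image_mono ?_)
  rintro k ⟨U, hU_open, hU_cover, hU_section⟩
  refine ⟨fun j => ContinuousMap.pi f ⁻¹' U j,
    fun j => (hU_open j).preimage (ContinuousMap.pi f).continuous,
    by rw [← preimage_iUnion, hU_cover, preimage_univ], fun j i i' => ?_⟩
  obtain ⟨s, hs⟩ := hU_section j
  exact NLegged.homotopic_restrict_preimage_of_section f s hs i i'

/-- For maps `f₁, …, fₙ : X → Y` with `Y` path-connected,
`D(f₁, …, fₙ) ≤ TCₙ(Y) = secat(e_n)`. -/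
theorem homDist_le_TC {X Y : Type*} [TopologicalSpace X] [TopologicalSpace Y]
    [PathConnectedSpace Y] {n : ℕ} (f : Fin n → C(X, Y)) :
    homDist f ≤ secat (enMap Y n) :=
  homDist_le_TC_general f
end

section
/- Subadditivity under products: if f_1,...,f_n : X → Y and g_1,...,g_n : X' → Y' are maps and X × X' is a normal space, then D(f_1×g_1, ..., f_n×g_n) ≤ D(f_1,...,f_n) + D(g_1,...,g_n). -/
open Set

open unitInterval


section Glue

variable {Z Y : Type*} [TopologicalSpace Z] [TopologicalSpace Y]

/-- Gluing homotopies over a disjoint family of open sets. -/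
lemma homotopic_restrict_iUnion {ι : Type*} (F G : C(Z, Y)) (S : ι → Set Z)
    (ho : ∀ i, IsOpen (S i))
    (hd : ∀ i j, i ≠ j → Disjoint (S i) (S j))
    (h : ∀ i, (F.restrict (S i)).Homotopic (G.restrict (S i))) :
    (F.restrict (⋃ i, S i)).Homotopic (G.restrict (⋃ i, S i)) := by
  classical
  have H : ∀ i, ContinuousMap.Homotopy (F.restrict (S i)) (G.restrict (S i)) :=
    fun i => (h i).some
  set W : Set Z := ⋃ i, S i with hW
  -- cover of the cylinder
  let T : ι → Set (I × ↥W) := fun i => {x | (x.2 : Z) ∈ S i}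
  have hTopen : ∀ i, IsOpen (T i) :=
    fun i => (ho i).preimage (continuous_subtype_val.comp continuous_snd)
  let e : ∀ i, C(↥(T i), I × ↥(S i)) := fun i =>
    ⟨fun x => ((x : I × ↥W).1, ⟨((x : I × ↥W).2 : Z), x.2⟩),
      (continuous_fst.comp continuous_subtype_val).prodMk
        ((continuous_subtype_val.comp (continuous_snd.comp continuous_subtype_val)).subtype_mk _)⟩
  let φ : ∀ i, C(↥(T i), Y) := fun i => (H i).toContinuousMap.comp (e i)
  have hφ : ∀ (i j) (x : I × ↥W) (hxi : x ∈ T i) (hxj : x ∈ T j),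
      φ i ⟨x, hxi⟩ = φ j ⟨x, hxj⟩ := by
    intro i j x hxi hxj
    rcases eq_or_ne i j with rfl | hij
    · rfl
    · exact absurd hxj (Set.disjoint_left.mp (hd i j hij) hxi)
  have hT : ∀ x : I × ↥W, ∃ i, T i ∈ nhds x := by
    intro x
    obtain ⟨i, hi⟩ := mem_iUnion.mp x.2.2
    exact ⟨i, (hTopen i).mem_nhds hi⟩
  let K : C(I × ↥W, Y) := ContinuousMap.liftCover T φ hφ hT
  have hK : ∀ (t : I) (z : ↥W) (i : ι) (hi : (z : Z) ∈ S i),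
      K (t, z) = H i (t, ⟨(z : Z), hi⟩) := by
    intro t z i hi
    have hx : ((t, z) : I × ↥W) ∈ T i := hi
    exact ContinuousMap.liftCover_coe (⟨(t, z), hx⟩ : ↥(T i))
  refine ⟨{ toContinuousMap := K, map_zero_left := ?_, map_one_left := ?_ }⟩
  · intro z
    obtain ⟨i, hi⟩ := mem_iUnion.mp z.2
    show K (0, z) = _
    rw [hK 0 z i hi, (H i).apply_zero]
    rfl
  · intro z
    obtain ⟨i, hi⟩ := mem_iUnion.mp z.2
    show K (1, z) = _
    rw [hK 1 z i hi, (H i).apply_one]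
    rfl

end Glue

section ProdHomotopy

variable {X X' Y Y' : Type*} [TopologicalSpace X] [TopologicalSpace X']
  [TopologicalSpace Y] [TopologicalSpace Y']

lemma homotopic_restrict_prodMap (F G : C(X, Y)) (F' G' : C(X', Y'))
    {S : Set X} {S' : Set X'}
    (h : (F.restrict S).Homotopic (G.restrict S))
    (h' : (F'.restrict S').Homotopic (G'.restrict S'))
    {V : Set (X × X')} (hV : V ⊆ S ×ˢ S') :
    ((F.prodMap F').restrict V).Homotopic ((G.prodMap G').restrict V) := by
  obtain ⟨H⟩ := h
  obtain ⟨H'⟩ := h'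
  refine ⟨{ toFun := fun tp => (H (tp.1, ⟨(tp.2 : X × X').1, (hV tp.2.2).1⟩),
                                H' (tp.1, ⟨(tp.2 : X × X').2, (hV tp.2.2).2⟩)),
            continuous_toFun := ?_, map_zero_left := ?_, map_one_left := ?_ }⟩
  · apply Continuous.prodMk
    · exact H.continuous.comp (continuous_fst.prodMk
        ((continuous_fst.comp (continuous_subtype_val.comp continuous_snd)).subtype_mk _))
    · exact H'.continuous.comp (continuous_fst.prodMk
        ((continuous_snd.comp (continuous_subtype_val.comp continuous_snd)).subtype_mk _))
  · intro v
    show (H (0, _), H' (0, _)) = _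
    rw [H.apply_zero, H'.apply_zero]
    rfl
  · intro v
    show (H (1, _), H' (1, _)) = _
    rw [H.apply_one, H'.apply_one]
    rfl

end ProdHomotopy

section Bump

lemma exists_bump {Z : Type*} [TopologicalSpace Z] [NormalSpace Z] {ι : Type*} [Finite ι]
    (U : ι → Set Z) (ho : ∀ i, IsOpen (U i)) (hc : (⋃ i, U i) = univ) :
    ∃ φ : ι → C(Z, ℝ), (∀ i z, 0 ≤ φ i z) ∧ (∀ i z, 0 < φ i z → z ∈ U i) ∧
      ∀ z, ∃ i, 0 < φ i z := by
  obtain ⟨v, hvU, hvo, hvc⟩ := exists_subset_iUnion_closure_subset isClosed_univ ho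
    (fun x _ => Set.toFinite _) (by rw [hc])
  have key : ∀ i, ∃ f : C(Z, ℝ), EqOn f 0 (U i)ᶜ ∧ EqOn f 1 (closure (v i)) ∧
      ∀ x, f x ∈ Icc (0 : ℝ) 1 := by
    intro i
    refine exists_continuous_zero_one_of_isClosed (ho i).isClosed_compl isClosed_closure ?_
    exact Set.disjoint_left.mpr fun x hx hx' => hx (hvc i hx')
  choose f h0 h1 hI using key
  refine ⟨f, fun i z => (hI i z).1, ?_, ?_⟩
  · intro i z hz
    by_contra hU
    have := h0 i hU
    simp only [Pi.zero_apply] at this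
    rw [this] at hz
    exact lt_irrefl 0 hz
  · intro z
    obtain ⟨i, hi⟩ := mem_iUnion.mp (hvU (mem_univ z))
    refine ⟨i, ?_⟩
    have := h1 i (subset_closure hi)
    simp only [Pi.one_apply] at this
    rw [this]
    norm_num

end Bump

lemma key_mem {X X' Y Y' : Type*} [TopologicalSpace X]
    [TopologicalSpace X'] [TopologicalSpace Y] [TopologicalSpace Y']
    [NormalSpace (X × X')] {n k l : ℕ} (f : Fin n → C(X, Y)) (g : Fin n → C(X', Y'))
    (U : Fin (k + 1) → Set X) (hUo : ∀ j, IsOpen (U j)) (hUc : (⋃ j, U j) = univ)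
    (hUh : ∀ j i i', ((f i).restrict (U j)).Homotopic ((f i').restrict (U j)))
    (V : Fin (l + 1) → Set X') (hVo : ∀ j, IsOpen (V j)) (hVc : (⋃ j, V j) = univ)
    (hVh : ∀ j i i', ((g i).restrict (V j)).Homotopic ((g i').restrict (V j))) :
    ∃ W : Fin (k + l + 1) → Set (X × X'), (∀ m, IsOpen (W m)) ∧ (⋃ m, W m) = univ ∧
      ∀ m i i', (((f i).prodMap (g i)).restrict (W m)).Homotopic
        (((f i').prodMap (g i')).restrict (W m)) := by
  classical
  -- bump functions subordinate to the two pulled-back covers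
  obtain ⟨φ, φ0, φU, φpos⟩ := exists_bump (fun i : Fin (k + 1) => (U i) ×ˢ (univ : Set X'))
    (fun i => (hUo i).prod isOpen_univ)
    (by
      ext p
      simp only [mem_iUnion, mem_prod, mem_univ, and_true, iff_true]
      have : p.1 ∈ ⋃ j, U j := by rw [hUc]; trivial
      exact mem_iUnion.mp this)
  obtain ⟨ψ, ψ0, ψU, ψpos⟩ := exists_bump (fun j : Fin (l + 1) => (univ : Set X) ×ˢ V j)
    (fun j => isOpen_univ.prod (hVo j))
    (by
      ext p
      simp only [mem_iUnion, mem_prod, mem_univ, true_and, iff_true]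
      have : p.2 ∈ ⋃ j, V j := by rw [hVc]; trivial
      exact mem_iUnion.mp this)
  set c : Fin (k + 1) × Fin (l + 1) → C(X × X', ℝ) := fun q => φ q.1 * ψ q.2 with hc
  -- the basic open pieces
  set Vo : Finset (Fin (k + 1)) → Finset (Fin (l + 1)) → Set (X × X') := fun A B =>
    {p | ∀ q ∈ A ×ˢ B, 0 < c q p ∧ ∀ q' ∉ A ×ˢ B, c q' p < c q p} with hVodef
  have hVo_open : ∀ A B, IsOpen (Vo A B) := by
    intro A B
    have : Vo A B = ⋂ q ∈ (A ×ˢ B : Finset _),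
        ({p | 0 < c q p} ∩ ⋂ (q' : Fin (k + 1) × Fin (l + 1)),
          ⋂ (_ : q' ∉ A ×ˢ B), {p | c q' p < c q p}) := by
      ext p
      simp only [hVodef, mem_setOf_eq, mem_iInter, mem_inter_iff]
    rw [this]
    refine isOpen_biInter_finset fun q _ => ?_
    refine IsOpen.inter (isOpen_lt continuous_const (c q).continuous) ?_
    refine isOpen_iInter_of_finite fun q' => ?_
    refine isOpen_iInter_of_finite fun _ => ?_
    exact isOpen_lt (c q').continuous (c q).continuous
  -- pieces lie in products of cover elements
  have hVo_sub : ∀ A B (q : Fin (k + 1) × Fin (l + 1)), q ∈ A ×ˢ B →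
      Vo A B ⊆ (U q.1) ×ˢ (V q.2) := by
    intro A B q hq p hp
    have h1 := (hp q hq).1
    have hφ : 0 < φ q.1 p := by
      by_contra h
      have : φ q.1 p = 0 := le_antisymm (not_lt.mp h) (φ0 q.1 p)
      rw [hc] at h1
      simp only [ContinuousMap.mul_apply, this, zero_mul] at h1
      exact lt_irrefl 0 h1
    have hψ : 0 < ψ q.2 p := by
      by_contra h
      have : ψ q.2 p = 0 := le_antisymm (not_lt.mp h) (ψ0 q.2 p)
      rw [hc] at h1
      simp only [ContinuousMap.mul_apply, this, mul_zero] at h1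
      exact lt_irrefl 0 h1
    exact ⟨(φU q.1 p hφ).1, (ψU q.2 p hψ).2⟩
  -- comparability of overlapping pieces
  have hcomp : ∀ A B A' B' (p : X × X'), p ∈ Vo A B → p ∈ Vo A' B' →
      A ×ˢ B ⊆ A' ×ˢ B' ∨ A' ×ˢ B' ⊆ A ×ˢ B := by
    intro A B A' B' p hp hp'
    by_contra h
    push_neg at h
    obtain ⟨q, hq, hq'⟩ := Finset.not_subset.mp h.1
    obtain ⟨r, hr', hr⟩ := Finset.not_subset.mp h.2
    have h1 : c r p < c q p := (hp q hq).2 r hr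
    have h2 : c q p < c r p := (hp' r hr').2 q hq'
    linarith
  -- nested rectangles with equal size-sum coincide
  have hrect : ∀ (A A' : Finset (Fin (k + 1))) (B B' : Finset (Fin (l + 1))),
      A.Nonempty → B.Nonempty → A.card + B.card = A'.card + B'.card →
      A ×ˢ B ⊆ A' ×ˢ B' → A = A' ∧ B = B' := by
    intro A A' B B' hA hB hcard hsub
    obtain ⟨i0, hi0⟩ := hA
    obtain ⟨j0, hj0⟩ := hB
    have hAA : A ⊆ A' := by
      intro i hi
      have hmem : (i, j0) ∈ A' ×ˢ B' := hsub (Finset.mem_product.mpr ⟨hi, hj0⟩)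
      exact (Finset.mem_product.mp hmem).1
    have hBB : B ⊆ B' := by
      intro j hj
      have hmem : (i0, j) ∈ A' ×ˢ B' := hsub (Finset.mem_product.mpr ⟨hi0, hj⟩)
      exact (Finset.mem_product.mp hmem).2
    have h1 : A.card ≤ A'.card := Finset.card_le_card hAA
    have h2 : B.card ≤ B'.card := Finset.card_le_card hBB
    exact ⟨Finset.eq_of_subset_of_card_le hAA (by omega),
           Finset.eq_of_subset_of_card_le hBB (by omega)⟩
  -- index type for level m
  let ιm : ℕ → Type _ := fun m =>
    {AB : Finset (Fin (k + 1)) × Finset (Fin (l + 1)) //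
      AB.1.Nonempty ∧ AB.2.Nonempty ∧ AB.1.card + AB.2.card = m + 2}
  refine ⟨fun m => ⋃ AB : ιm (m : ℕ), Vo AB.1.1 AB.1.2, ?_, ?_, ?_⟩
  · intro m
    exact isOpen_iUnion fun AB => hVo_open _ _
  · rw [iUnion_eq_univ_iff]
    intro p
    set A : Finset (Fin (k + 1)) := Finset.univ.filter (fun i => 0 < φ i p) with hA
    set B : Finset (Fin (l + 1)) := Finset.univ.filter (fun j => 0 < ψ j p) with hB
    have hAmem : ∀ i0, i0 ∈ A ↔ 0 < φ i0 p := fun i0 => by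
      rw [hA, Finset.mem_filter]; simp
    have hBmem : ∀ j0, j0 ∈ B ↔ 0 < ψ j0 p := fun j0 => by
      rw [hB, Finset.mem_filter]; simp
    have hAne : A.Nonempty := by
      obtain ⟨i, hi⟩ := φpos p
      exact ⟨i, (hAmem i).mpr hi⟩
    have hBne : B.Nonempty := by
      obtain ⟨j, hj⟩ := ψpos p
      exact ⟨j, (hBmem j).mpr hj⟩
    have hAcard : A.card ≤ k + 1 := by
      calc A.card ≤ (Finset.univ : Finset (Fin (k + 1))).card := Finset.card_le_card (by simp)
        _ = k + 1 := by simp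
    have hBcard : B.card ≤ l + 1 := by
      calc B.card ≤ (Finset.univ : Finset (Fin (l + 1))).card := Finset.card_le_card (by simp)
        _ = l + 1 := by simp
    have hA1 : 1 ≤ A.card := hAne.card_pos
    have hB1 : 1 ≤ B.card := hBne.card_pos
    have hmlt : A.card + B.card - 2 < k + l + 1 := by omega
    refine ⟨⟨A.card + B.card - 2, hmlt⟩, ?_⟩
    have hcardeq : A.card + B.card = (((⟨A.card + B.card - 2, hmlt⟩ : Fin (k+l+1)) : ℕ)) + 2 := by
      simp only []
      omega
    refine mem_iUnion.mpr ⟨⟨(A, B), hAne, hBne, hcardeq⟩, ?_⟩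
    intro q hq
    obtain ⟨hq1, hq2⟩ := Finset.mem_product.mp hq
    have hφq : 0 < φ q.1 p := (hAmem q.1).mp hq1
    have hψq : 0 < ψ q.2 p := (hBmem q.2).mp hq2
    have hcq : 0 < c q p := by
      rw [hc]; simpa using mul_pos hφq hψq
    refine ⟨hcq, ?_⟩
    intro q' hq'
    have : c q' p = 0 := by
      rcases (not_and_or.mp (fun hh => hq' (Finset.mem_product.mpr hh))) with h | h
      · have : φ q'.1 p = 0 := le_antisymm
          (not_lt.mp fun hp' => h ((hAmem q'.1).mpr hp'))
          (φ0 q'.1 p)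
        rw [hc]; simp [this]
      · have : ψ q'.2 p = 0 := le_antisymm
          (not_lt.mp fun hp' => h ((hBmem q'.2).mpr hp'))
          (ψ0 q'.2 p)
        rw [hc]; simp [this]
    rw [this]
    exact hcq
  · intro m a b
    refine homotopic_restrict_iUnion _ _ _ (fun AB => hVo_open _ _) ?_ ?_
    · intro AB AB' hne
      rw [Set.disjoint_left]
      intro p hp hp'
      obtain ⟨⟨A, B⟩, hAne, hBne, hcard⟩ := AB
      obtain ⟨⟨A', B'⟩, hAne', hBne', hcard'⟩ := AB'
      dsimp only at hAne hBne hcard hAne' hBne' hcard' hp hp'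
      rcases hcomp A B A' B' p hp hp' with hsub | hsub
      · obtain ⟨rfl, rfl⟩ := hrect A A' B B' hAne hBne (by omega) hsub
        exact hne rfl
      · obtain ⟨rfl, rfl⟩ := hrect A' A B' B hAne' hBne' (by omega) hsub
        exact hne rfl
    · rintro ⟨⟨A, B⟩, hAne, hBne, hcard⟩
      obtain ⟨i, hi⟩ := hAne
      obtain ⟨j, hj⟩ := hBne
      exact homotopic_restrict_prodMap _ _ _ _ (hUh i a b) (hVh j a b)
        (hVo_sub A B (i, j) (Finset.mem_product.mpr ⟨hi, hj⟩))


/-- Subadditivity under products: if `X × X'` is normal then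
`D(f₁×g₁, …, fₙ×gₙ) ≤ D(f₁, …, fₙ) + D(g₁, …, gₙ)`. -/
theorem homDist_prodMap_le {X X' Y Y' : Type*} [TopologicalSpace X]
    [TopologicalSpace X'] [TopologicalSpace Y] [TopologicalSpace Y']
    [NormalSpace (X × X')] {n : ℕ} (f : Fin n → C(X, Y)) (g : Fin n → C(X', Y')) :
    homDist (fun i => (f i).prodMap (g i)) ≤ homDist f + homDist g := by
  classical
  set Sf : Set ℕ := {k | ∃ U : Fin (k + 1) → Set X,
    (∀ j, IsOpen (U j)) ∧ (⋃ j, U j) = Set.univ ∧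
    ∀ j i i', ((f i).restrict (U j)).Homotopic ((f i').restrict (U j))} with hSf
  set Sg : Set ℕ := {k | ∃ U : Fin (k + 1) → Set X',
    (∀ j, IsOpen (U j)) ∧ (⋃ j, U j) = Set.univ ∧
    ∀ j i i', ((g i).restrict (U j)).Homotopic ((g i').restrict (U j))} with hSg
  set Sp : Set ℕ := {k | ∃ U : Fin (k + 1) → Set (X × X'),
    (∀ j, IsOpen (U j)) ∧ (⋃ j, U j) = Set.univ ∧
    ∀ j i i', (((f i).prodMap (g i)).restrict (U j)).Homotopic
      (((f i').prodMap (g i')).restrict (U j))} with hSp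
  have hDf : homDist f = sInf ((fun k : ℕ => (k : ℕ∞)) '' Sf) := rfl
  have hDg : homDist g = sInf ((fun k : ℕ => (k : ℕ∞)) '' Sg) := rfl
  have hDp : homDist (fun i => (f i).prodMap (g i)) =
      sInf ((fun k : ℕ => (k : ℕ∞)) '' Sp) := rfl
  rcases Sf.eq_empty_or_nonempty with hf | hf
  · rw [hDf, hf, image_empty, sInf_empty, top_add]
    exact le_top
  rcases Sg.eq_empty_or_nonempty with hg | hg
  · rw [hDg, hg, image_empty, sInf_empty, add_top]
    exact le_top
  obtain ⟨U, hUo, hUc, hUh⟩ : sInf Sf ∈ Sf := Nat.sInf_mem hf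
  obtain ⟨V, hVo, hVc, hVh⟩ : sInf Sg ∈ Sg := Nat.sInf_mem hg
  have hmem : sInf Sf + sInf Sg ∈ Sp := by
    obtain ⟨W, hWo, hWc, hWh⟩ := key_mem f g U hUo hUc hUh V hVo hVc hVh
    exact ⟨W, hWo, hWc, hWh⟩
  calc homDist (fun i => (f i).prodMap (g i))
      ≤ ((sInf Sf + sInf Sg : ℕ) : ℕ∞) := by
        rw [hDp]
        exact sInf_le ⟨_, hmem, rfl⟩
    _ = ((sInf Sf : ℕ) : ℕ∞) + ((sInf Sg : ℕ) : ℕ∞) := by push_cast; rfl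
    _ ≤ homDist f + homDist g := by
        refine add_le_add ?_ ?_
        · rw [hDf]
          refine le_sInf ?_
          rintro b ⟨k', hk', rfl⟩
          show ((sInf Sf : ℕ) : ℕ∞) ≤ (k' : ℕ∞)
          exact_mod_cast Nat.sInf_le hk'
        · rw [hDg]
          refine le_sInf ?_
          rintro b ⟨k', hk', rfl⟩
          show ((sInf Sg : ℕ) : ℕ∞) ≤ (k' : ℕ∞)
          exact_mod_cast Nat.sInf_le hk'
end

section
/- Product inequality for higher topological complexity: for path-connected spaces X_1 and X_2 with X_1^n × X_2^n normal, TC_n(X_1 × X_2) ≤ TC_n(X_1) + TC_n(X_2). -/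
/-!
Take open covers `U₀, …, U_k` of `X₁ⁿ` and `V₀, …, V_l` of `X₂ⁿ` on which the projections are
pairwise homotopic, and partitions of unity `(fᵢ)`, `(gⱼ)` on the normal space
`(X₁ × X₂)ⁿ ≅ X₁ⁿ × X₂ⁿ` subordinate to the pulled-back covers. At each point `x` the cumulative
sums of the `fᵢ x` and of the `gⱼ x` cut `[0, 1]` into consecutive intervals `Iᵢ(x)` and
`Jⱼ(x)`. The open sets `Wᵢⱼ = {x | Iᵢ(x) ∩ Jⱼ(x) has interior}` lie in `Uᵢ × Vⱼ` and cover;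
for a fixed value of `i + j` they are pairwise disjoint, because both families of intervals
move to the right. The projections are homotopic on each `Wᵢⱼ`, hence on the disjoint union
`⋃_{i+j=s} Wᵢⱼ`, and these `k + l + 1` sets cover `(X₁ × X₂)ⁿ`.
-/

open Set

/-- Projection of `X^n` onto the `i`-th factor. -/
def prMap (X : Type*) [TopologicalSpace X] (n : ℕ) (i : Fin n) :
    C((Fin n → X), X) :=
  ⟨fun x => x i, continuous_apply i⟩

/-- The `n`-th topological complexity (as the homotopic distance of the `n`
coordinate projections) of a space. -/
noncomputable def tcomplexity (n : ℕ) (X : Type*) [TopologicalSpace X] : ℕ∞ :=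
  homDist (prMap X n)

open Function

theorem ContinuousMap.Homotopic.restrict_iUnion_of_pairwise_disjoint {X Y ι : Type*}
    [TopologicalSpace X] [TopologicalSpace Y] {S : ι → Set X} (hS : ∀ t, IsOpen (S t))
    (hdisj : Pairwise (Disjoint on S)) {f g : C(X, Y)}
    (h : ∀ t, (f.restrict (S t)).Homotopic (g.restrict (S t))) :
    (f.restrict (⋃ t, S t)).Homotopic (g.restrict (⋃ t, S t)) := by
  set W := ⋃ t, S t
  let H t := (h t).some
  let T t : Set (unitInterval × W) := {q | (q.2 : X) ∈ S t}
  let φ t : C(T t, Y) := (H t).toContinuousMap.comp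
    ⟨fun q => (q.1.1, ⟨q.1.2, q.2⟩), by fun_prop⟩
  have hφ : ∀ t t' (q : unitInterval × W) (ht : q ∈ T t) (ht' : q ∈ T t'),
      φ t ⟨q, ht⟩ = φ t' ⟨q, ht'⟩ := by
    intro t t' q ht ht'
    obtain rfl : t = t' := hdisj.eq (Set.not_disjoint_iff.2 ⟨_, ht, ht'⟩)
    rfl
  have hT_nhds : ∀ q : unitInterval × W, ∃ t, T t ∈ nhds q := fun q =>
    (Set.mem_iUnion.1 q.2.2).imp fun t ht =>
      ((hS t).preimage (by fun_prop)).mem_nhds ht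
  let G := ContinuousMap.liftCover T φ hφ hT_nhds
  have hG (s : unitInterval) (x : W) t (hx : (x : X) ∈ S t) : G (s, x) = H t (s, ⟨x, hx⟩) :=
    ContinuousMap.liftCover_coe (i := t) ⟨(s, x), hx⟩
  refine ⟨⟨G, fun x => ?_, fun x => ?_⟩⟩ <;>
  · obtain ⟨t, ht⟩ := Set.mem_iUnion.1 x.2
    simp [hG _ x t ht]

theorem ContinuousMap.Homotopic.restrict_comp_of_mapsTo {X Y Z : Type*} [TopologicalSpace X]
    [TopologicalSpace Y] [TopologicalSpace Z] {f g : C(X, Y)} {U : Set X}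
    (h : (f.restrict U).Homotopic (g.restrict U)) (φ : C(Z, X)) {V : Set Z}
    (hφ : MapsTo φ V U) :
    ((f.comp φ).restrict V).Homotopic ((g.comp φ).restrict V) :=
  h.comp (.refl ⟨hφ.restrict, φ.continuous.restrict hφ⟩)

theorem exists_mem_Ico_of_le_of_lt {α : Type*} [LinearOrder α] {F : ℕ → α} {a : α}
    (h0 : F 0 ≤ a) {m : ℕ} (hm : a < F m) : ∃ i < m, a ∈ Ico (F i) (F (i + 1)) := by
  induction m with
  | zero => exact absurd h0 hm.not_ge
  | succ m ih =>
    by_cases ha : a < F m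
    · obtain ⟨i, hi, h⟩ := ih ha
      exact ⟨i, hi.trans m.lt_succ_self, h⟩
    · exact ⟨m, m.lt_succ_self, not_lt.1 ha, hm⟩

namespace PartitionOfUnity

variable {Z : Type*} [TopologicalSpace Z] {m : ℕ} {s : Set Z}

def cumSum (f : PartitionOfUnity (Fin m) Z s) (i : ℕ) (x : Z) : ℝ :=
  ∑ r ∈ Finset.range i, if h : r < m then f ⟨r, h⟩ x else 0

variable (f : PartitionOfUnity (Fin m) Z s)

@[fun_prop]
theorem continuous_cumSum (i : ℕ) : Continuous (f.cumSum i) :=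
  continuous_finsetSum _ fun r _ => by split_ifs <;> fun_prop

theorem cumSum_zero (x : Z) : f.cumSum 0 x = 0 := by simp [cumSum]

theorem cumSum_succ (i : ℕ) (x : Z) :
    f.cumSum (i + 1) x = f.cumSum i x + if h : i < m then f ⟨i, h⟩ x else 0 :=
  Finset.sum_range_succ _ _

theorem monotone_cumSum (x : Z) : Monotone fun i => f.cumSum i x := by
  refine monotone_nat_of_le_succ fun i => ?_
  rw [cumSum_succ]
  split_ifs
  · exact le_add_of_nonneg_right (f.nonneg _ x)
  · exact (add_zero _).ge

theorem cumSum_eq_one {x : Z} (hx : x ∈ s) : f.cumSum m x = 1 := by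
  rw [← f.sum_eq_one hx, finsum_eq_sum_of_fintype, cumSum,
    ← Fin.sum_univ_eq_sum_range fun r => if h : r < m then f ⟨r, h⟩ x else 0]
  simp

theorem mem_of_cumSum_lt {U : Fin m → Set Z} (hf : f.IsSubordinate U) {i : Fin m} {x : Z}
    (hlt : f.cumSum i x < f.cumSum (i + 1) x) : x ∈ U i := by
  rw [cumSum_succ, dif_pos i.isLt] at hlt
  exact hf i (subset_closure fun h0 => by simp [h0] at hlt)

theorem exists_mem_Ico_cumSum {x : Z} (hx : x ∈ s) {a : ℝ} (ha₀ : 0 ≤ a) (ha₁ : a < 1) :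
    ∃ i : Fin m, a ∈ Ico (f.cumSum i x) (f.cumSum (i + 1) x) := by
  obtain ⟨i, hi, h⟩ := exists_mem_Ico_of_le_of_lt (F := fun i => f.cumSum i x)
    ((f.cumSum_zero x).trans_le ha₀) ((f.cumSum_eq_one hx).symm ▸ ha₁)
  exact ⟨⟨i, hi⟩, h⟩

end PartitionOfUnity

theorem exists_refinement_inter_of_two_covers {Z : Type*} [TopologicalSpace Z] [NormalSpace Z]
    {m m' : ℕ} {A : Fin m → Set Z} {B : Fin m' → Set Z} (hAo : ∀ i, IsOpen (A i))
    (hA : ⋃ i, A i = univ) (hBo : ∀ j, IsOpen (B j)) (hB : ⋃ j, B j = univ) :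
    ∃ W : Fin m → Fin m' → Set Z, (∀ i j, IsOpen (W i j)) ∧ (∀ i j, W i j ⊆ A i ∩ B j) ∧
      (∀ x, ∃ i j, x ∈ W i j) ∧
      ∀ (i i' : Fin m) (j j' : Fin m'), (i : ℕ) + j = i' + j' → i ≠ i' →
        Disjoint (W i j) (W i' j') := by
  obtain ⟨f, hf⟩ := PartitionOfUnity.exists_isSubordinate_of_locallyFinite isClosed_univ A hAo
    (locallyFinite_of_finite A) hA.ge
  obtain ⟨g, hg⟩ := PartitionOfUnity.exists_isSubordinate_of_locallyFinite isClosed_univ B hBo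
    (locallyFinite_of_finite B) hB.ge
  let F := f.cumSum
  let G := g.cumSum
  let W' (i j : ℕ) : Set Z := {x | max (F i x) (G j x) < min (F (i + 1) x) (G (j + 1) x)}
  have hdisj (i j i' j' : ℕ) (hi : i < i') (hj : j' < j) : Disjoint (W' i j) (W' i' j') := by
    refine Set.disjoint_left.2 fun x hx hx' => ?_
    have := f.monotone_cumSum x hi
    have := g.monotone_cumSum x hj
    simp only [W', mem_ofPred_eq, max_lt_iff, lt_min_iff] at hx hx'
    linarith
  refine ⟨fun i j => W' i j, fun i j => isOpen_lt (by fun_prop) (by fun_prop), ?_, ?_, ?_⟩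
  · intro i j x hx
    simp only [W', mem_ofPred_eq, max_lt_iff, lt_min_iff] at hx
    exact ⟨f.mem_of_cumSum_lt hf (by linarith), g.mem_of_cumSum_lt hg (by linarith)⟩
  · intro x
    obtain ⟨i, hFi⟩ := f.exists_mem_Ico_cumSum (mem_univ x) le_rfl one_pos
    obtain ⟨j, hGj⟩ := g.exists_mem_Ico_cumSum (mem_univ x) le_rfl one_pos
    exact ⟨i, j, (max_le hFi.1 hGj.1).trans_lt (lt_min hFi.2 hGj.2)⟩
  · intro i i' j j' hsum hne
    rcases lt_or_gt_of_ne (Fin.val_ne_of_ne hne) with h | h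
    · exact hdisj i j i' j' h (by omega)
    · exact (hdisj i' j' i j h (by omega)).symm

def Homeomorph.arrowProdEquivProdArrow (ι X Y : Type*) [TopologicalSpace X]
    [TopologicalSpace Y] : (ι → X × Y) ≃ₜ (ι → X) × (ι → Y) where
  toEquiv := Equiv.arrowProdEquivProdArrow ι (fun _ => X) (fun _ => Y)
  continuous_toFun := by dsimp [Equiv.arrowProdEquivProdArrow]; fun_prop
  continuous_invFun := by dsimp [Equiv.arrowProdEquivProdArrow]; fun_prop

section HomDist

variable {X Y : Type*} [TopologicalSpace X] [TopologicalSpace Y] {n : ℕ}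

-- `homDist f` is by definition the infimum of the `k` with `HasHomotopicCover f k`.
def HasHomotopicCover (f : Fin n → C(X, Y)) (k : ℕ) : Prop :=
  ∃ U : Fin (k + 1) → Set X, (∀ j, IsOpen (U j)) ∧ (⋃ j, U j) = Set.univ ∧
    ∀ j i i', ((f i).restrict (U j)).Homotopic ((f i').restrict (U j))

theorem homDist_le_of_hasHomotopicCover {f : Fin n → C(X, Y)} {k : ℕ}
    (h : HasHomotopicCover f k) : homDist f ≤ k :=
  sInf_le ⟨k, h, rfl⟩

theorem exists_hasHomotopicCover_of_homDist_ne_top {f : Fin n → C(X, Y)} (h : homDist f ≠ ⊤) :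
    ∃ k : ℕ, homDist f = k ∧ HasHomotopicCover f k := by
  have hne : ((fun k : ℕ => (k : ℕ∞)) '' {k | HasHomotopicCover f k}).Nonempty :=
    nonempty_iff_ne_empty.2 fun h0 => h <| by
      change sInf ((fun k : ℕ => (k : ℕ∞)) '' {k | HasHomotopicCover f k}) = ⊤
      rw [h0, sInf_empty]
  obtain ⟨k, hk, hfk⟩ := csInf_mem hne
  exact ⟨k, hfk.symm, hk⟩

end HomDist

section Product

variable {X₁ X₂ : Type*} [TopologicalSpace X₁] [TopologicalSpace X₂] {n : ℕ}

theorem homotopic_restrict_prMap_prod {a a' : Fin n} {U : Set (Fin n → X₁)}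
    {V : Set (Fin n → X₂)} {Ω : Set (Fin n → X₁ × X₂)}
    (h₁ : ((prMap X₁ n a).restrict U).Homotopic ((prMap X₁ n a').restrict U))
    (h₂ : ((prMap X₂ n a).restrict V).Homotopic ((prMap X₂ n a').restrict V))
    (hΩ : Ω ⊆ Homeomorph.arrowProdEquivProdArrow (Fin n) X₁ X₂ ⁻¹' (U ×ˢ V)) :
    ((prMap (X₁ × X₂) n a).restrict Ω).Homotopic ((prMap (X₁ × X₂) n a').restrict Ω) :=
  let π : C(Fin n → X₁ × X₂, (Fin n → X₁) × (Fin n → X₂)) :=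
    Homeomorph.arrowProdEquivProdArrow (Fin n) X₁ X₂
  (h₁.restrict_comp_of_mapsTo (.comp .fst π) fun _ hx => (hΩ hx).1).prodMk
    (h₂.restrict_comp_of_mapsTo (.comp .snd π) fun _ hx => (hΩ hx).2)

theorem HasHomotopicCover.prMap_prod [NormalSpace ((Fin n → X₁) × (Fin n → X₂))] {k l : ℕ}
    (h₁ : HasHomotopicCover (prMap X₁ n) k) (h₂ : HasHomotopicCover (prMap X₂ n) l) :
    HasHomotopicCover (prMap (X₁ × X₂) n) (k + l) := by
  obtain ⟨U, hUo, hU, hUh⟩ := h₁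
  obtain ⟨V, hVo, hV, hVh⟩ := h₂
  let e := Homeomorph.arrowProdEquivProdArrow (Fin n) X₁ X₂
  have := e.symm.normalSpace
  obtain ⟨W, hWo, hWsub, hWcov, hWdisj⟩ := exists_refinement_inter_of_two_covers
    (A := fun i => (Prod.fst ∘ e) ⁻¹' U i) (B := fun j => (Prod.snd ∘ e) ⁻¹' V j)
    (fun i => (hUo i).preimage (by fun_prop)) (by simp [← preimage_iUnion, hU])
    (fun j => (hVo j).preimage (by fun_prop)) (by simp [← preimage_iUnion, hV])
  refine ⟨fun s => ⋃ p : {p : Fin (k + 1) × Fin (l + 1) // (p.1 : ℕ) + p.2 = s}, W p.1.1 p.1.2,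
    fun s => isOpen_iUnion fun p => hWo _ _, ?_, fun s a a' => ?_⟩
  · refine eq_univ_of_forall fun x => ?_
    obtain ⟨i, j, hx⟩ := hWcov x
    exact mem_iUnion.2 ⟨⟨i + j, by omega⟩, mem_iUnion.2 ⟨⟨(i, j), rfl⟩, hx⟩⟩
  · refine .restrict_iUnion_of_pairwise_disjoint (fun p => hWo _ _) ?_ fun p => ?_
    · intro p q hpq
      refine hWdisj _ _ _ _ (p.2.trans q.2.symm) fun hi => hpq ?_
      exact Subtype.ext (Prod.ext hi (Fin.ext (by have := p.2; have := q.2; omega)))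
    · exact homotopic_restrict_prMap_prod (hUh p.1.1 a a') (hVh p.1.2 a a')
        fun x hx => hWsub _ _ hx

end Product

theorem TC_prod_le_general {X₁ X₂ : Type*} [TopologicalSpace X₁] [TopologicalSpace X₂]
    (n : ℕ)
    [NormalSpace ((Fin n → X₁) × (Fin n → X₂))] :
    tcomplexity n (X₁ × X₂) ≤ tcomplexity n X₁ + tcomplexity n X₂ := by
  rcases eq_or_ne (tcomplexity n X₁) ⊤ with h₁ | h₁
  · simp [h₁]
  rcases eq_or_ne (tcomplexity n X₂) ⊤ with h₂ | h₂
  · simp [h₂]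
  obtain ⟨k, hk, hck⟩ := exists_hasHomotopicCover_of_homDist_ne_top h₁
  obtain ⟨l, hl, hcl⟩ := exists_hasHomotopicCover_of_homDist_ne_top h₂
  rw [tcomplexity, tcomplexity, tcomplexity, hk, hl, ← Nat.cast_add]
  exact homDist_le_of_hasHomotopicCover (hck.prMap_prod hcl)

/-- Product inequality: `TCₙ(X₁ × X₂) ≤ TCₙ(X₁) + TCₙ(X₂)` for path-connected
spaces with `X₁ⁿ × X₂ⁿ` normal. -/
theorem TC_prod_le {X₁ X₂ : Type*} [TopologicalSpace X₁] [TopologicalSpace X₂]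
    [PathConnectedSpace X₁] [PathConnectedSpace X₂] (n : ℕ)
    [NormalSpace ((Fin n → X₁) × (Fin n → X₂))] :
    tcomplexity n (X₁ × X₂) ≤ tcomplexity n X₁ + tcomplexity n X₂ :=
  TC_prod_le_general n
end

section
/- Homotopy invariance of higher homotopic distance: let α : X → X', β : X' → X, γ : Y → Y', η : Y' → Y realize homotopy equivalences X ≃ X' and Y ≃ Y', and let f_i : X → Y and g_i : X' → Y' be maps with f_i ≃ η ∘ g_i ∘ α for all i (the maps correspond under the equivalences). Then D(f_1,...,f_n) = D(g_1,...,g_n). -/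
/-!
The homotopic distance does not increase under pre- or post-composition (pull the open cover back,
resp. keep it) and only depends on the homotopy classes of the maps. Hence
`D(f) ≤ D(η ∘ g ∘ α) ≤ D(g)`, and since `g ≃ γ ∘ η ∘ g ∘ α ∘ β ≃ γ ∘ f ∘ β`, also `D(g) ≤ D(f)`.
-/

open Set

theorem ContinuousMap.Homotopic.restrict {X Y : Type*} [TopologicalSpace X] [TopologicalSpace Y]
    {f₀ f₁ : C(X, Y)} (h : f₀.Homotopic f₁) (s : Set X) :
    (f₀.restrict s).Homotopic (f₁.restrict s) :=
  h.comp (.refl ((ContinuousMap.id X).restrict s))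

section homDist

variable {X X' Y Y' : Type*} [TopologicalSpace X] [TopologicalSpace X'] [TopologicalSpace Y]
  [TopologicalSpace Y'] {n : ℕ}

theorem homDist_le_of_homotopic {f f' : Fin n → C(X, Y)} (h : ∀ i, (f i).Homotopic (f' i)) :
    homDist f ≤ homDist f' :=
  sInf_le_sInf <| image_mono fun _ ⟨U, hU, hcov, hhom⟩ => ⟨U, hU, hcov, fun j i i' =>
    ((h i).restrict _).trans ((hhom j i i').trans ((h i').restrict _).symm)⟩

theorem homDist_comp_le (η : C(Y, Y')) (f : Fin n → C(X, Y)) :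
    homDist (fun i => η.comp (f i)) ≤ homDist f :=
  sInf_le_sInf <| image_mono fun _ ⟨U, hU, hcov, hhom⟩ => ⟨U, hU, hcov, fun j i i' =>
    (ContinuousMap.Homotopic.refl η).comp (hhom j i i')⟩

theorem homDist_precomp_le (α : C(X, X')) (f : Fin n → C(X', Y)) :
    homDist (fun i => (f i).comp α) ≤ homDist f :=
  sInf_le_sInf <| image_mono fun _ ⟨U, hU, hcov, hhom⟩ =>
    ⟨fun j => α ⁻¹' U j, fun j => (hU j).preimage α.continuous,
      by rw [← preimage_iUnion, hcov, preimage_univ], fun j i i' =>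
      (hhom j i i').comp (.refl (α.restrictPreimage (U j)))⟩

end homDist

theorem homDist_homotopy_invariant_general {X X' Y Y' : Type*} [TopologicalSpace X]
    [TopologicalSpace X'] [TopologicalSpace Y] [TopologicalSpace Y'] {n : ℕ}
    (α : C(X, X')) (β : C(X', X)) (γ : C(Y, Y')) (η : C(Y', Y))
    (hαβ : (α.comp β).Homotopic (ContinuousMap.id X'))
    (hγη : (γ.comp η).Homotopic (ContinuousMap.id Y'))
    (f : Fin n → C(X, Y)) (g : Fin n → C(X', Y'))
    (hfg : ∀ i, (f i).Homotopic ((η.comp (g i)).comp α)) :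
    homDist f = homDist g := by
  have hgf : ∀ i, (g i).Homotopic ((γ.comp (f i)).comp β) := fun i =>
    have hgαβ : (g i).Homotopic ((γ.comp η).comp ((g i).comp (α.comp β))) :=
      hγη.symm.comp ((ContinuousMap.Homotopic.refl (g i)).comp hαβ.symm)
    hgαβ.trans (((ContinuousMap.Homotopic.refl γ).comp (hfg i).symm).comp (.refl β))
  apply le_antisymm
  · calc homDist f ≤ homDist fun i => (η.comp (g i)).comp α := homDist_le_of_homotopic hfg
      _ ≤ homDist fun i => η.comp (g i) := homDist_precomp_le α _
      _ ≤ homDist g := homDist_comp_le η g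
  · calc homDist g ≤ homDist fun i => (γ.comp (f i)).comp β := homDist_le_of_homotopic hgf
      _ ≤ homDist fun i => γ.comp (f i) := homDist_precomp_le β _
      _ ≤ homDist f := homDist_comp_le γ f

/-- Homotopy invariance of the higher homotopic distance: if `α, β, γ, η`
realize homotopy equivalences `X ≃ X'` and `Y ≃ Y'`, and `fᵢ ≃ η ∘ gᵢ ∘ α`
for all `i`, then `D(f₁, …, fₙ) = D(g₁, …, gₙ)`. -/
theorem homDist_homotopy_invariant {X X' Y Y' : Type*} [TopologicalSpace X]
    [TopologicalSpace X'] [TopologicalSpace Y] [TopologicalSpace Y'] {n : ℕ}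
    (α : C(X, X')) (β : C(X', X)) (γ : C(Y, Y')) (η : C(Y', Y))
    (hαβ : (α.comp β).Homotopic (ContinuousMap.id X'))
    (hβα : (β.comp α).Homotopic (ContinuousMap.id X))
    (hγη : (γ.comp η).Homotopic (ContinuousMap.id Y'))
    (hηγ : (η.comp γ).Homotopic (ContinuousMap.id Y))
    (f : Fin n → C(X, Y)) (g : Fin n → C(X', Y'))
    (hfg : ∀ i, (f i).Homotopic ((η.comp (g i)).comp α)) :
    homDist f = homDist g :=
  homDist_homotopy_invariant_general α β γ η hαβ hγη f g hfg
end

section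
/- Combination of open covers lemma: let X be a normal space and let U = {U_0,...,U_m} and V = {V_0,...,V_n} be open covers of X such that each U_i satisfies property (A) and each V_j satisfies property (B), where (A) and (B) are properties of open sets inherited by open subsets and by disjoint unions. Then X has an open cover W = {W_0,...,W_{m+n}} of m+n+1 open sets each satisfying both (A) and (B). -/
open Set

/-- Combination of open covers: in a normal space `X`, given open covers
`{U₀, …, U_m}` with property (A) and `{V₀, …, Vₙ}` with property (B), where (A)
and (B) are inherited by open subsets and by disjoint unions, there is an open
cover `{W₀, …, W_{m+n}}` of `m+n+1` open sets each satisfying both (A) and (B). -/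
theorem combine_open_covers {X : Type*} [TopologicalSpace X] [NormalSpace X]
    (A B : Set X → Prop)
    (hA_subset : ∀ U V : Set X, A U → IsOpen V → V ⊆ U → A V)
    (hB_subset : ∀ U V : Set X, B U → IsOpen V → V ⊆ U → B V)
    (hA_disjUnion : ∀ S : Set (Set X), (∀ U ∈ S, IsOpen U ∧ A U) →
      S.PairwiseDisjoint id → A (⋃₀ S))
    (hB_disjUnion : ∀ S : Set (Set X), (∀ U ∈ S, IsOpen U ∧ B U) →
      S.PairwiseDisjoint id → B (⋃₀ S))
    {m n : ℕ} (U : Fin (m + 1) → Set X) (V : Fin (n + 1) → Set X)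
    (hUopen : ∀ i, IsOpen (U i)) (hUcover : (⋃ i, U i) = Set.univ)
    (hVopen : ∀ j, IsOpen (V j)) (hVcover : (⋃ j, V j) = Set.univ)
    (hUA : ∀ i, A (U i)) (hVB : ∀ j, B (V j)) :
    ∃ W : Fin (m + n + 1) → Set X, (∀ k, IsOpen (W k)) ∧
      (⋃ k, W k) = Set.univ ∧ ∀ k, A (W k) ∧ B (W k) := by
  -- bump coverings subordinate to `U` and `V`
  obtain ⟨f, hf⟩ := BumpCovering.exists_isSubordinate_of_locallyFinite
    (s := (univ : Set X)) isClosed_univ U hUopen (locallyFinite_of_finite U)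
    (by rw [hUcover])
  obtain ⟨g, hg⟩ := BumpCovering.exists_isSubordinate_of_locallyFinite
    (s := (univ : Set X)) isClosed_univ V hVopen (locallyFinite_of_finite V)
    (by rw [hVcover])
  set val : Fin (m + 1) ⊕ Fin (n + 1) → C(X, ℝ) := Sum.elim (fun i => f i) (fun j => g j)
    with hval
  -- the basic pieces
  set P : Finset (Fin (m + 1) ⊕ Fin (n + 1)) → Set X :=
    fun R => {x | ∀ a ∈ R, 0 < val a x ∧ ∀ b ∉ R, val b x < val a x} with hP
  have hPopen : ∀ R, IsOpen (P R) := by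
    intro R
    have hrw : P R = ⋂ a ∈ R, ({x | 0 < val a x} ∩ ⋂ b ∈ Rᶜ, {x | val b x < val a x}) := by
      ext x
      simp only [hP, mem_setOf_eq, mem_iInter, mem_inter_iff, Finset.mem_compl]
    rw [hrw]
    refine isOpen_biInter_finset fun a _ => ?_
    exact ((isOpen_lt continuous_const (val a).continuous).inter
      (isOpen_biInter_finset fun b _ => isOpen_lt (val b).continuous (val a).continuous))
  -- pieces with the same cardinality are disjoint
  have hPdisj : ∀ R R' : Finset (Fin (m + 1) ⊕ Fin (n + 1)), R.card = R'.card → R ≠ R' →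
      ∀ x, x ∈ P R → x ∈ P R' → False := by
    intro R R' hcard hne x hx hx'
    obtain ⟨i, hiR, hiR'⟩ : ∃ i, i ∈ R ∧ i ∉ R' := by
      by_contra h
      push_neg at h
      exact hne (Finset.eq_of_subset_of_card_le (fun a ha => h a ha) hcard.ge)
    have hsub : R' ⊆ R := by
      intro b hb
      by_contra hbR
      have h1 := (hx i hiR).2 b hbR
      have h2 := (hx' b hb).2 i hiR'
      linarith
    exact hne (Finset.eq_of_subset_of_card_le hsub hcard.le).symm
  -- pieces are contained in the original cover sets
  have hPsubU : ∀ R i, Sum.inl i ∈ R → P R ⊆ U i := by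
    intro R i hi x hx
    have : 0 < f i x := (hx _ hi).1
    exact hf i (subset_tsupport _ this.ne')
  have hPsubV : ∀ R j, Sum.inr j ∈ R → P R ⊆ V j := by
    intro R j hj x hx
    have : 0 < g j x := (hx _ hj).1
    exact hg j (subset_tsupport _ this.ne')
  -- every point lies in some good piece
  have hcover : ∀ x : X, ∃ R : Finset (Fin (m + 1) ⊕ Fin (n + 1)),
      (∃ i, Sum.inl i ∈ R) ∧ (∃ j, Sum.inr j ∈ R) ∧ 2 ≤ R.card ∧
      R.card ≤ m + n + 2 ∧ x ∈ P R := by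
    intro x
    obtain ⟨i₀, hi₀⟩ := f.eventuallyEq_one' x (mem_univ x)
    obtain ⟨j₀, hj₀⟩ := g.eventuallyEq_one' x (mem_univ x)
    have hfi₀ : f i₀ x = 1 := hi₀.eq_of_nhds
    have hgj₀ : g j₀ x = 1 := hj₀.eq_of_nhds
    refine ⟨Finset.univ.filter (fun a => 1 ≤ val a x), ⟨i₀, ?_⟩, ⟨j₀, ?_⟩, ?_, ?_, ?_⟩
    · simp [hval, hfi₀]
    · simp [hval, hgj₀]
    · have hpair : ({Sum.inl i₀, Sum.inr j₀} : Finset (Fin (m + 1) ⊕ Fin (n + 1))) ⊆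
          Finset.univ.filter (fun a => 1 ≤ val a x) := by
        intro a ha
        simp only [Finset.mem_insert, Finset.mem_singleton] at ha
        rcases ha with rfl | rfl <;> simp [hval, hfi₀, hgj₀]
      calc 2 = ({Sum.inl i₀, Sum.inr j₀} : Finset (Fin (m + 1) ⊕ Fin (n + 1))).card := by
              rw [Finset.card_insert_of_notMem (by simp), Finset.card_singleton]
        _ ≤ _ := Finset.card_le_card hpair
    · calc (Finset.univ.filter (fun a => 1 ≤ val a x)).card
          ≤ Finset.univ.card := Finset.card_le_card (Finset.filter_subset _ _)
        _ = m + n + 2 := by simp [Fintype.card_sum]; ring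
    · intro a ha
      rw [Finset.mem_filter] at ha
      refine ⟨lt_of_lt_of_le one_pos ha.2, fun b hb => ?_⟩
      rw [Finset.mem_filter] at hb
      push_neg at hb
      exact lt_of_lt_of_le (hb (Finset.mem_univ b)) ha.2
  -- the families of pieces grouped by cardinality
  set 𝒮 : Fin (m + n + 1) → Set (Set X) := fun k =>
    {s | ∃ R : Finset (Fin (m + 1) ⊕ Fin (n + 1)), R.card = (k : ℕ) + 2 ∧
      (∃ i, Sum.inl i ∈ R) ∧ (∃ j, Sum.inr j ∈ R) ∧ s = P R} with h𝒮
  have h𝒮good : ∀ k, ∀ s ∈ 𝒮 k, IsOpen s ∧ A s ∧ B s := by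
    rintro k s ⟨R, -, ⟨i, hi⟩, ⟨j, hj⟩, rfl⟩
    exact ⟨hPopen R, hA_subset (U i) (P R) (hUA i) (hPopen R) (hPsubU R i hi),
      hB_subset (V j) (P R) (hVB j) (hPopen R) (hPsubV R j hj)⟩
  have h𝒮disj : ∀ k, (𝒮 k).PairwiseDisjoint id := by
    rintro k s ⟨R, hcard, -, -, rfl⟩ t ⟨R', hcard', -, -, rfl⟩ hst
    have hRR' : R ≠ R' := by rintro rfl; exact hst rfl
    rw [Function.onFun, Set.disjoint_left]
    intro x hxs hxt
    exact hPdisj R R' (hcard.trans hcard'.symm) hRR' x hxs hxt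
  refine ⟨fun k => ⋃₀ 𝒮 k, fun k => isOpen_sUnion fun s hs => (h𝒮good k s hs).1, ?_, fun k =>
    ⟨hA_disjUnion (𝒮 k) (fun s hs => ⟨(h𝒮good k s hs).1, (h𝒮good k s hs).2.1⟩) (h𝒮disj k),
     hB_disjUnion (𝒮 k) (fun s hs => ⟨(h𝒮good k s hs).1, (h𝒮good k s hs).2.2⟩) (h𝒮disj k)⟩⟩
  rw [eq_univ_iff_forall]
  intro x
  obtain ⟨R, hiR, hjR, h2, hle, hxP⟩ := hcover x
  rw [mem_iUnion]
  refine ⟨⟨R.card - 2, by omega⟩, ?_⟩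
  exact ⟨P R, ⟨R, by simp; omega, hiR, hjR, rfl⟩, hxP⟩
end

section
/- For a path-connected space X and an open set U ⊆ X^n, the fibration e_n : X^{J_n} → X^n admits a continuous section over U if and only if there exists a map g : U → X such that each composition pr_i ∘ ι : U ↪ X^n → X (ι the inclusion, pr_i the i-th projection) is homotopic to g. -/
open Set

/-! A homotopy from `f` to `g` on `Y` is the same as a continuous family, indexed by `Y`, of paths
from `f y` to `g y` (the exponential law, `I` being compact). So a section `s` over `U` gives the
homotopies `prᵢ ≃ g` with `g x` the common origin of the legs of `s x`, and conversely homotopies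
`g ≃ prᵢ` are the legs of a section. -/

open scoped unitInterval

namespace ContinuousMap

variable {Y X : Type*} [TopologicalSpace Y] [TopologicalSpace X]

def Homotopy.toPathFamily {f₀ f₁ : C(Y, X)} (F : f₀.Homotopy f₁) : C(Y, C(I, X)) :=
  (F.toContinuousMap.comp prodSwap).curry

@[simp]
theorem Homotopy.toPathFamily_apply {f₀ f₁ : C(Y, X)} (F : f₀.Homotopy f₁) (y : Y) (t : I) :
    F.toPathFamily y t = F (t, y) :=
  rfl

theorem Homotopic.of_pathFamily {f₀ f₁ : C(Y, X)} (φ : C(Y, C(I, X)))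
    (h₀ : ∀ y, φ y 0 = f₀ y) (h₁ : ∀ y, φ y 1 = f₁ y) : f₀.Homotopic f₁ :=
  ⟨{ toContinuousMap := φ.uncurry.comp prodSwap
     map_zero_left := h₀
     map_one_left := h₁ }⟩

theorem exists_homotopic_iff_exists_pathFamily [Nonempty X] {ι : Type*} (f : ι → C(Y, X)) :
    (∃ g : C(Y, X), ∀ i, (f i).Homotopic g) ↔
      ∃ φ : ι → C(Y, C(I, X)), (∀ i j y, φ i y 0 = φ j y 0) ∧ ∀ i y, φ i y 1 = f i y := by
  constructor
  · rintro ⟨g, hg⟩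
    refine ⟨fun i => (hg i).some.symm.toPathFamily, fun i j y => ?_, fun i y => ?_⟩ <;> simp
  · rintro ⟨φ, hstart, hend⟩
    rcases isEmpty_or_nonempty ι with _ | ⟨⟨i₀⟩⟩
    · exact ⟨const Y (Classical.arbitrary X), isEmptyElim⟩
    · exact ⟨⟨fun y => φ i₀ y 0, by fun_prop⟩, fun i => (Homotopic.of_pathFamily (φ i)
        (hstart i i₀) (hend i)).symm⟩

end ContinuousMap

theorem exists_lift_enMap_iff_exists_pathFamily {Y X : Type*} [TopologicalSpace Y]
    [TopologicalSpace X] {n : ℕ} (f : C(Y, Fin n → X)) :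
    (∃ s : C(Y, NLegged X n), ∀ y, enMap X n (s y) = f y) ↔
      ∃ φ : Fin n → C(Y, C(I, X)), (∀ i j y, φ i y 0 = φ j y 0) ∧ ∀ i y, φ i y 1 = f y i := by
  constructor
  · rintro ⟨s, hs⟩
    exact ⟨fun i => ⟨fun y => (s y).1 i,
        (continuous_apply i).comp (continuous_subtype_val.comp s.continuous)⟩,
      fun i j y => (s y).2 i j, fun i y => congrFun (hs y) i⟩
  · rintro ⟨φ, hstart, hend⟩
    exact ⟨⟨fun y => ⟨fun i => φ i y, fun i j => hstart i j y⟩, by fun_prop⟩,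
      fun y => funext (hend · y)⟩

theorem section_iff_homotopic_to_common_map_general {X : Type*} [TopologicalSpace X]
    [PathConnectedSpace X] (n : ℕ) (U : Set (Fin n → X)) :
    (∃ s : C(U, NLegged X n), ∀ x : U, enMap X n (s x) = (x : Fin n → X)) ↔
      ∃ g : C(U, X), ∀ i : Fin n,
        ((prMap X n i).restrict U).Homotopic g := by
  have : Nonempty X := PathConnectedSpace.nonempty
  exact (exists_lift_enMap_iff_exists_pathFamily ⟨Subtype.val, continuous_subtype_val⟩).trans
    (ContinuousMap.exists_homotopic_iff_exists_pathFamily fun i => (prMap X n i).restrict U).symm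

/-- The fibration `e_n : X^{J_n} → X^n` admits a continuous section over an open
set `U ⊆ X^n` iff there is a map `g : U → X` such that each composition
`prᵢ ∘ ι : U → X` is homotopic to `g`. -/
theorem section_iff_homotopic_to_common_map {X : Type*} [TopologicalSpace X]
    [PathConnectedSpace X] (n : ℕ) (U : Set (Fin n → X)) (hU : IsOpen U) :
    (∃ s : C(U, NLegged X n), ∀ x : U, enMap X n (s x) = (x : Fin n → X)) ↔
      ∃ g : C(U, X), ∀ i : Fin n,
        ((prMap X n i).restrict U).Homotopic g :=
  section_iff_homotopic_to_common_map_general n U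
end
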